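/- Let n = 2 and let m ≥ 1 be an integer. The dimension of the ℂ-linear space of SL(2,ℂ)-invariant polynomials in ℂ[x₁⁽¹⁾, x₂⁽¹⁾, x₁⁽²⁾, x₂⁽²⁾] that are homogeneous of total degree 2m equals 1. -/

import Mathlib

open MvPolynomial

/-- The action of `σ ∈ SL(2,ℂ)` on polynomials in the `2n` variables
`x₁⁽¹⁾, x₂⁽¹⁾, …, x₁⁽ⁿ⁾, x₂⁽ⁿ⁾`, given by `(σ·f)(x⁽¹⁾,…,x⁽ⁿ⁾) = f(σ⁻¹x⁽¹⁾,…,σ⁻¹x⁽ⁿ⁾)`. -/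
noncomputable def sl2Act (n : ℕ) (σ : Matrix.SpecialLinearGroup (Fin 2) ℂ) :
    MvPolynomial (Fin n × Fin 2) ℂ →ₐ[ℂ] MvPolynomial (Fin n × Fin 2) ℂ :=
  aeval fun p : Fin n × Fin 2 =>
    ∑ b : Fin 2, C (((σ⁻¹ : Matrix.SpecialLinearGroup (Fin 2) ℂ) : Matrix (Fin 2) (Fin 2) ℂ) p.2 b)
      * X (p.1, b)

/-- The submodule of `SL(2,ℂ)`-invariant polynomials. -/
noncomputable def invSubmodule (n : ℕ) : Submodule ℂ (MvPolynomial (Fin n × Fin 2) ℂ) :=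
  ⨅ σ : Matrix.SpecialLinearGroup (Fin 2) ℂ,
    LinearMap.eqLocus (sl2Act n σ).toLinearMap LinearMap.id

/-!
The bracket `[1 2] = x₁⁽¹⁾x₂⁽²⁾ - x₂⁽¹⁾x₁⁽²⁾` is invariant. Conversely, `SL(2,ℂ)` moves any pair of
vectors with determinant `d ≠ 0` to `((1, 0), (0, d))`, so an invariant `f` agrees with `g([1 2])`
off the hypersurface `[1 2] = 0`, where `g(t) = f((1, 0), (0, t))`. Multiplying by `[1 2]` turns
this into an identity of polynomial functions, whence `f = g([1 2])`, and homogeneity of degree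
`2m` leaves only the term `gₘ [1 2]ᵐ`.
-/

open scoped MatrixGroups

lemma MvPolynomial.homogeneousComponent_aeval_of_isHomogeneous {σ R : Type*} [CommSemiring R]
    {φ : MvPolynomial σ R} {k : ℕ} (hφ : φ.IsHomogeneous k) (hk : k ≠ 0) (g : Polynomial R)
    (m : ℕ) : homogeneousComponent (k * m) (Polynomial.aeval φ g) = g.coeff m • φ ^ m := by
  rw [Polynomial.aeval_eq_sum_range, map_sum]
  have hterm (i : ℕ) : homogeneousComponent (k * m) (g.coeff i • φ ^ i) =
      if m = i then g.coeff i • φ ^ i else 0 := by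
    rw [homogeneousComponent_of_mem (Submodule.smul_mem _ _ (hφ.pow i))]
    simp only [Nat.mul_left_cancel_iff (Nat.pos_of_ne_zero hk)]
  simp only [hterm, Finset.sum_ite_eq, Finset.mem_range]
  split_ifs with hm
  · rfl
  · rw [g.coeff_eq_zero_of_natDegree_lt (by omega), zero_smul]

namespace SL2Invariant

variable {n : ℕ}

/-- The point of `(ℂ²)ⁿ` whose `i`-th vector is the `i`-th column of `M`. -/
def coords {R : Type*} (M : Matrix (Fin 2) (Fin n) R) : Fin n × Fin 2 → R :=
  fun p => M p.2 p.1

lemma eval_sl2Act_inv (σ : SL(2, ℂ)) (M : Matrix (Fin 2) (Fin n) ℂ)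
    (f : MvPolynomial (Fin n × Fin 2) ℂ) :
    eval (coords M) (sl2Act n σ⁻¹ f) = eval (coords ((σ : Matrix (Fin 2) (Fin 2) ℂ) * M)) f := by
  simp only [sl2Act, inv_inv, map_aeval]
  congr 1
  ext <;> simp [coords, Matrix.mul_apply]

lemma eval_mul_of_mem_invSubmodule {f : MvPolynomial (Fin n × Fin 2) ℂ} (hf : f ∈ invSubmodule n)
    (τ : SL(2, ℂ)) (M : Matrix (Fin 2) (Fin n) ℂ) :
    eval (coords ((τ : Matrix (Fin 2) (Fin 2) ℂ) * M)) f = eval (coords M) f := by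
  have hinv : sl2Act n τ⁻¹ f = f := (Submodule.mem_iInf _).mp hf τ⁻¹
  rw [← eval_sl2Act_inv, hinv]

/-- The bracket `[i j] = det(x⁽ⁱ⁾, x⁽ʲ⁾)`. -/
noncomputable def bracket (i j : Fin n) : MvPolynomial (Fin n × Fin 2) ℂ :=
  X (i, 0) * X (j, 1) - X (i, 1) * X (j, 0)

lemma isHomogeneous_bracket (i j : Fin n) : (bracket i j).IsHomogeneous 2 :=
  ((isHomogeneous_X _ _).mul (isHomogeneous_X _ _)).sub
    ((isHomogeneous_X _ _).mul (isHomogeneous_X _ _))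

lemma eval_coords_bracket (M : Matrix (Fin 2) (Fin n) ℂ) (i j : Fin n) :
    eval (coords M) (bracket i j) = (M.submatrix id ![i, j]).det := by
  simp only [bracket, map_sub, map_mul, eval_X, coords, Matrix.det_fin_two, Matrix.submatrix_apply,
    id_eq, Matrix.cons_val_zero, Matrix.cons_val_one, Matrix.cons_val_fin_one]
  ring

lemma exists_eq_coords (v : Fin n × Fin 2 → ℂ) : ∃ M : Matrix (Fin 2) (Fin n) ℂ, v = coords M :=
  ⟨Matrix.of fun a i => v (i, a), rfl⟩

lemma sl2Act_bracket (σ : SL(2, ℂ)) (i j : Fin n) : sl2Act n σ (bracket i j) = bracket i j := by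
  refine MvPolynomial.funext fun v => ?_
  obtain ⟨M, rfl⟩ := exists_eq_coords v
  rw [← inv_inv σ, eval_sl2Act_inv, eval_coords_bracket, eval_coords_bracket,
    Matrix.submatrix_mul _ _ id id _ Function.bijective_id, Matrix.submatrix_id_id, Matrix.det_mul,
    Matrix.SpecialLinearGroup.det_coe, one_mul]

lemma bracket_pow_mem (i j : Fin n) (m : ℕ) :
    bracket i j ^ m ∈ homogeneousSubmodule (Fin n × Fin 2) ℂ (2 * m) ⊓ invSubmodule n :=
  ⟨(isHomogeneous_bracket i j).pow m,
    (Submodule.mem_iInf _).2 fun σ => show sl2Act n σ _ = _ by rw [map_pow, sl2Act_bracket]; rfl⟩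

lemma eval_coords_bracket_zero_one (M : Matrix (Fin 2) (Fin 2) ℂ) :
    eval (coords M) (bracket 0 1) = M.det := by
  simp only [bracket, map_sub, map_mul, eval_X, coords, Matrix.det_fin_two]
  ring

lemma bracket_zero_one_ne_zero : bracket (0 : Fin 2) 1 ≠ 0 := fun h => by
  simpa [eval_coords_bracket_zero_one] using congrArg (eval (coords 1)) h

/-- The restriction of `f` to the normal forms `(x⁽¹⁾, x⁽²⁾) = ((1, 0), (0, t))`. -/
noncomputable def slice (f : MvPolynomial (Fin 2 × Fin 2) ℂ) : Polynomial ℂ :=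
  aeval (coords (Matrix.diagonal ![1, Polynomial.X])) f

lemma eval_slice (f : MvPolynomial (Fin 2 × Fin 2) ℂ) (t : ℂ) :
    (slice f).eval t = eval (coords (Matrix.diagonal ![1, t])) f := by
  rw [slice, ← Polynomial.coe_evalRingHom, map_aeval]
  congr 1
  ext p
  · simp
  · rcases p with ⟨i, a⟩
    fin_cases i <;> fin_cases a <;> simp [coords]

lemma eval_coords_eq_eval_slice {f : MvPolynomial (Fin 2 × Fin 2) ℂ} (hf : f ∈ invSubmodule 2)
    {M : Matrix (Fin 2) (Fin 2) ℂ} (hM : M.det ≠ 0) :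
    eval (coords M) f = (slice f).eval M.det := by
  let τ : SL(2, ℂ) := ⟨Matrix.diagonal ![1, M.det] * M⁻¹, by
    simp [Matrix.det_mul, Matrix.det_nonsing_inv, hM]⟩
  have hτ : (τ : Matrix (Fin 2) (Fin 2) ℂ) * M = Matrix.diagonal ![1, M.det] := by
    simp [τ, Matrix.mul_assoc, Matrix.nonsing_inv_mul _ (isUnit_iff_ne_zero.2 hM)]
  rw [eval_slice, ← hτ, eval_mul_of_mem_invSubmodule hf]

lemma eq_aeval_slice {f : MvPolynomial (Fin 2 × Fin 2) ℂ} (hf : f ∈ invSubmodule 2) :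
    f = Polynomial.aeval (bracket 0 1) (slice f) := by
  refine sub_eq_zero.1 ((mul_eq_zero.1 ?_).resolve_right bracket_zero_one_ne_zero)
  refine MvPolynomial.funext fun v => ?_
  obtain ⟨M, rfl⟩ := exists_eq_coords v
  rw [map_mul, map_sub, eval_coords_bracket_zero_one, map_zero]
  rcases eq_or_ne M.det 0 with hM | hM
  · rw [hM, mul_zero]
  · have h := Polynomial.aeval_algHom_apply (aeval (coords M)) (bracket 0 1) (slice f)
    simp only [aeval_eq_eval, eval_coords_bracket_zero_one, Polynomial.coe_aeval_eq_eval] at h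
    rw [eval_coords_eq_eval_slice hf hM, h, sub_self, zero_mul]

lemma eq_smul_bracket_pow {m : ℕ} {f : MvPolynomial (Fin 2 × Fin 2) ℂ}
    (hh : f ∈ homogeneousSubmodule (Fin 2 × Fin 2) ℂ (2 * m)) (hf : f ∈ invSubmodule 2) :
    f = (slice f).coeff m • bracket 0 1 ^ m :=
  calc f = homogeneousComponent (2 * m) f := (homogeneousComponent_eq_self hh).symm
    _ = homogeneousComponent (2 * m) (Polynomial.aeval (bracket 0 1) (slice f)) := by
      rw [← eq_aeval_slice hf]
    _ = _ := homogeneousComponent_aeval_of_isHomogeneous (isHomogeneous_bracket 0 1) two_ne_zero _ _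

end SL2Invariant

theorem dim_invariants_two_atoms (m : ℕ) :
    Module.finrank ℂ
        ↥(homogeneousSubmodule (Fin 2 × Fin 2) ℂ (2 * m) ⊓ invSubmodule 2) = 1 := by
  have hspan : homogeneousSubmodule (Fin 2 × Fin 2) ℂ (2 * m) ⊓ invSubmodule 2 =
      ℂ ∙ SL2Invariant.bracket 0 1 ^ m := by
    refine le_antisymm ?_ ?_
    · rintro f ⟨hh, hf⟩
      exact Submodule.mem_span_singleton.2 ⟨_, (SL2Invariant.eq_smul_bracket_pow hh hf).symm⟩
    · exact (Submodule.span_singleton_le_iff_mem _ _).2 (SL2Invariant.bracket_pow_mem 0 1 m)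
  rw [hspan, finrank_span_singleton (pow_ne_zero m SL2Invariant.bracket_zero_one_ne_zero)]
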